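/- With φ_{q,ℓ}, φ_{q,0}, φ_{0,ℓ} as defined below, define h = Σ_{α=1}^{p} Σ_{μ=p+1}^{p+q} (z_μ·∂_α ⊗ A*(ω_{α,μ}) ⊗ 1). Then (p+q−1) · (h φ_{q,ℓ}) = (p+q+ℓ−1) · ((h φ_{q,0}) · φ_{0,ℓ}), where the product on the right multiplies the polynomial factors, wedges the exterior-algebra factors, and retains the tensor factor. Equivalently, the form ψ_{q,ℓ} := (−1/(2(p+q−1))) (h φ_{q,0}) · φ_{0,ℓ} equals (−1/(2(p+q+ℓ−1))) h φ_{q,ℓ}. -/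

import Mathlib

open scoped TensorProduct
open Finset

noncomputable section

namespace FockModel

/-- The polynomial algebra `ℂ[z_1, …, z_{p+q}]` (Fock model, `n = 1`). -/
abbrev P (p q : ℕ) := MvPolynomial (Fin (p + q)) ℂ

/-- The vector space with basis `{ω_{α,μ}}` indexed by pairs of a positive and a
negative index. -/
abbrev Om (p q : ℕ) := (Fin p × Fin q) → ℂ

/-- The exterior algebra on the `ω_{α,μ}`. -/
abbrev E (p q : ℕ) := ExteriorAlgebra ℂ (Om p q)

/-- `ℂ^{p+q}`. -/
abbrev Vc (p q : ℕ) := Fin (p + q) → ℂ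

/-- The `ℓ`-fold tensor power `T^ℓ = (ℂ^{p+q})^{⊗ℓ}`. -/
abbrev T (p q ℓ : ℕ) := ⨂[ℂ] (_ : Fin ℓ), Vc p q

/-- The ambient space `P ⊗ E ⊗ T^ℓ`. -/
abbrev F (p q ℓ : ℕ) := (P p q ⊗[ℂ] E p q) ⊗[ℂ] T p q ℓ

/-- The standard basis vector `e_i` of `ℂ^{p+q}`. -/
def e (p q : ℕ) (i : Fin (p + q)) : Vc p q := Pi.single i 1

/-- The basis vector `ω_{α,μ}` of the exterior algebra. -/
def ω (p q : ℕ) (α : Fin p) (μ : Fin q) : E p q :=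
  ExteriorAlgebra.ι ℂ (Pi.single (α, μ) 1)

/-- The contraction (interior product) `A*(ω_{α,μ})` on the exterior algebra:
the unique odd derivation sending `ω_{β,ν}` to `1` if `(β,ν) = (α,μ)` and to `0`
otherwise, realized as contraction against the dual basis element of `ω_{α,μ}`. -/
def contr (p q : ℕ) (α : Fin p) (μ : Fin q) : E p q →ₗ[ℂ] E p q :=
  CliffordAlgebra.contractLeft (Q := (0 : QuadraticForm ℂ (Om p q)))
    (LinearMap.proj (α, μ))

/-- The Schwartz form `φ_{q,ℓ}` in the Fock model. -/
def phi (p q ℓ : ℕ) : F p q ℓ :=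
  ((2 : ℂ) ^ ((q : ℂ) / 2) * (-Complex.I / (4 * (Real.pi : ℂ))) ^ (q + ℓ)) •
    ∑ a : Fin q → Fin p, ∑ b : Fin ℓ → Fin p,
      (((∏ k : Fin q, MvPolynomial.X (Fin.castAdd q (a k)) : P p q) *
          ∏ k : Fin ℓ, MvPolynomial.X (Fin.castAdd q (b k)))
        ⊗ₜ[ℂ] (List.ofFn fun μ : Fin q => ω p q (a μ) μ).prod)
      ⊗ₜ[ℂ] PiTensorProduct.tprod ℂ fun k : Fin ℓ => e p q (Fin.castAdd q (b k))

/-- The scalar-valued form `φ_{q,0}`, viewed in `P ⊗ E` (the trivial tensor factor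
`T^0` being dropped). -/
def phiQ0' (p q : ℕ) : P p q ⊗[ℂ] E p q :=
  ((2 : ℂ) ^ ((q : ℂ) / 2) * (-Complex.I / (4 * (Real.pi : ℂ))) ^ q) •
    ∑ a : Fin q → Fin p,
      (∏ k : Fin q, MvPolynomial.X (Fin.castAdd q (a k)) : P p q)
        ⊗ₜ[ℂ] (List.ofFn fun μ : Fin q => ω p q (a μ) μ).prod

/-- The form `φ_{0,ℓ}`. -/
def phi0 (p q ℓ : ℕ) : F p q ℓ :=
  ((-Complex.I / (4 * (Real.pi : ℂ))) ^ ℓ) •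
    ∑ b : Fin ℓ → Fin p,
      ((∏ k : Fin ℓ, MvPolynomial.X (Fin.castAdd q (b k)) : P p q) ⊗ₜ[ℂ] (1 : E p q))
        ⊗ₜ[ℂ] PiTensorProduct.tprod ℂ fun k : Fin ℓ => e p q (Fin.castAdd q (b k))

/-- `h = Σ_{α,μ} (z_μ·∂_α ⊗ A*(ω_{α,μ}) ⊗ 1)` acting on `P ⊗ E ⊗ T^ℓ`. -/
def hOp (p q ℓ : ℕ) : F p q ℓ →ₗ[ℂ] F p q ℓ :=
  ∑ α : Fin p, ∑ μ : Fin q,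
    TensorProduct.map
      (TensorProduct.map
        (LinearMap.mulLeft ℂ (MvPolynomial.X (Fin.natAdd p μ) : P p q) ∘ₗ
          (MvPolynomial.pderiv (Fin.castAdd q α)).toLinearMap)
        (contr p q α μ))
      LinearMap.id

/-- `h = Σ_{α,μ} (z_μ·∂_α ⊗ A*(ω_{α,μ}))` acting on `P ⊗ E`. -/
def hOp' (p q : ℕ) : P p q ⊗[ℂ] E p q →ₗ[ℂ] P p q ⊗[ℂ] E p q :=
  ∑ α : Fin p, ∑ μ : Fin q,
    TensorProduct.map
      (LinearMap.mulLeft ℂ (MvPolynomial.X (Fin.natAdd p μ) : P p q) ∘ₗ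
        (MvPolynomial.pderiv (Fin.castAdd q α)).toLinearMap)
      (contr p q α μ)

end FockModel

/-!
Contracting `ω_a = ω_{a 0, 0} ∧ ⋯ ∧ ω_{a (q-1), q-1}` against `ω_{α,μ}` kills it unless
`α = a μ`, and otherwise removes the `μ`-th factor with sign `(-1)^μ`. Writing
`a = insertNth μ β c`, the sum over the removed index `β` becomes `∑_β ∂_β (z_β f)`,
which is `(p + deg f) f` by Euler's identity for the degree in the positive variables;
here `f = z^c g` has degree `q - 1 + deg g`. So `h (∑_a z^a g ⊗ ω_a) = (p + q - 1 + deg g) C g`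
for one form `C` independent of `g`, and taking `g = z^b` (for `φ_{q,ℓ}`) and `g = 1`
(for `φ_{q,0}`) shows that both sides are `(p+q-1)(p+q+ℓ-1)` times the same form.
-/

section Contraction

open CliffordAlgebra

variable {R M : Type*} [CommRing R] [AddCommGroup M] [Module R M] {Q : QuadraticForm R M}

theorem CliffordAlgebra.contractLeft_prod_ofFn_ι_eq_zero (d : Module.Dual R M) {n : ℕ}
    (v : Fin n → M) (h : ∀ i, d (v i) = 0) :
    contractLeft d (List.ofFn fun i => ι Q (v i)).prod = 0 := by
  induction n with
  | zero => simp
  | succ n ih =>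
    rw [List.ofFn_succ, List.prod_cons, contractLeft_ι_mul, h, ih _ fun i => h i.succ,
      zero_smul, mul_zero, sub_zero]

theorem CliffordAlgebra.contractLeft_prod_ofFn_ι_of_forall_ne {n : ℕ} (d : Module.Dual R M)
    (μ : Fin (n + 1)) (v : Fin (n + 1) → M) (h : ∀ i ≠ μ, d (v i) = 0) :
    contractLeft d (List.ofFn fun i => ι Q (v i)).prod =
      ((-1 : R) ^ (μ : ℕ) * d (v μ)) •
        (List.ofFn fun i => ι Q (v (μ.succAbove i))).prod := by
  induction n with
  | zero =>
    obtain rfl := Fin.fin_one_eq_zero μ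
    simp [Algebra.algebraMap_eq_smul_one]
  | succ n ih =>
    rw [List.ofFn_succ, List.prod_cons, contractLeft_ι_mul]
    rcases Fin.eq_zero_or_eq_succ μ with rfl | ⟨μ, rfl⟩
    · rw [contractLeft_prod_ofFn_ι_eq_zero d _ fun i => h i.succ (Fin.succ_ne_zero i)]
      simp
    · rw [h 0 (Fin.succ_ne_zero μ).symm,
        ih μ _ fun i hi => h i.succ (Fin.succ_injective _ |>.ne hi), zero_smul, zero_sub]
      simp [Fin.succ_succAbove_succ, pow_succ]

end Contraction

namespace MvPolynomial

variable {σ R : Type*} [CommSemiring R] [Fintype σ]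

theorem sum_pderiv_X_mul_of_isWeightedHomogeneous [DecidableEq σ] (s : Finset σ)
    {φ : MvPolynomial σ R} {n : ℕ}
    (h : φ.IsWeightedHomogeneous (fun i => if i ∈ s then 1 else 0) n) :
    ∑ i ∈ s, pderiv i (X i * φ) = (s.card + n) • φ := by
  have euler := h.sum_weight_X_mul_pderiv
  simp only [ite_smul, one_smul, zero_smul, Finset.sum_ite_mem, Finset.univ_inter] at euler
  simp only [Derivation.leibniz, pderiv_X_self, smul_eq_mul, mul_one, Finset.sum_add_distrib,
    Finset.sum_const, euler, add_smul]
  exact add_comm _ _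

end MvPolynomial

namespace FockModel

open MvPolynomial

local notation "κ" => -Complex.I / (4 * (Real.pi : ℂ))

def zProd (p q : ℕ) {m : ℕ} (a : Fin m → Fin p) : P p q :=
  ∏ k, X (Fin.castAdd q (a k))

def ωProd (p q : ℕ) {m : ℕ} (a : Fin m → Fin p) (s : Fin m → Fin q) : E p q :=
  (List.ofFn fun k => ω p q (a k) (s k)).prod

def eProd (p q ℓ : ℕ) (b : Fin ℓ → Fin p) : T p q ℓ :=
  PiTensorProduct.tprod ℂ fun k => e p q (Fin.castAdd q (b k))

def posWeight (p q : ℕ) (i : Fin (p + q)) : ℕ :=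
  if i ∈ univ.map (Fin.castAddEmb q) then 1 else 0

theorem zProd_insertNth (p q : ℕ) {m : ℕ} (μ : Fin (m + 1)) (β : Fin p)
    (c : Fin m → Fin p) :
    zProd p q (Fin.insertNth μ β c) = X (Fin.castAdd q β) * zProd p q c := by
  simp [zProd, Fin.prod_univ_succAbove _ μ]

theorem isWeightedHomogeneous_zProd (p q : ℕ) {m : ℕ} (a : Fin m → Fin p) :
    (zProd p q a).IsWeightedHomogeneous (posWeight p q) m := by
  have := IsWeightedHomogeneous.prod univ (fun k => X (R := ℂ) (Fin.castAdd q (a k)))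
    (fun k => posWeight p q (Fin.castAdd q (a k))) fun k _ => isWeightedHomogeneous_X ℂ _ _
  simpa [posWeight, zProd] using this

theorem sum_pderiv_X_mul (p q : ℕ) {f : P p q} {n : ℕ}
    (hf : f.IsWeightedHomogeneous (posWeight p q) n) :
    ∑ β : Fin p, pderiv (Fin.castAdd q β) (X (Fin.castAdd q β) * f) =
      ((p : ℂ) + n) • f := by
  have := sum_pderiv_X_mul_of_isWeightedHomogeneous (univ.map (Fin.castAddEmb q)) hf
  simpa [Finset.sum_map, ← Nat.cast_smul_eq_nsmul ℂ] using this

theorem contr_ωProd_id (p q : ℕ) (α : Fin p) (μ : Fin (q + 1)) (a : Fin (q + 1) → Fin p) :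
    contr p (q + 1) α μ (ωProd p (q + 1) a id) =
      if a μ = α then
        (-1 : ℂ) ^ (μ : ℕ) • ωProd p (q + 1) (a ∘ μ.succAbove) μ.succAbove
      else 0 := by
  have hv : ∀ i ≠ μ,
      LinearMap.proj (R := ℂ) (φ := fun _ : Fin p × Fin (q + 1) => ℂ) (α, μ)
        (Pi.single (a i, i) 1) = 0 := fun i hi => by
    simp [hi.symm]
  rw [contr, ωProd, ωProd]
  simp only [ω, ExteriorAlgebra.ι, id]
  rw [CliffordAlgebra.contractLeft_prod_ofFn_ι_of_forall_ne _ μ _ hv]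
  split_ifs with h <;> simp [h]

theorem hOp'_tmul_ωProd_id (p q : ℕ) (f : P p (q + 1)) (a : Fin (q + 1) → Fin p) :
    hOp' p (q + 1) (f ⊗ₜ ωProd p (q + 1) a id) =
      ∑ μ : Fin (q + 1), (-1 : ℂ) ^ (μ : ℕ) •
        ((X (Fin.natAdd p μ) * pderiv (Fin.castAdd (q + 1) (a μ)) f) ⊗ₜ
          ωProd p (q + 1) (a ∘ μ.succAbove) μ.succAbove) := by
  simp only [hOp', LinearMap.sum_apply, TensorProduct.map_tmul,
    LinearMap.comp_apply, LinearMap.mulLeft_apply, contr_ωProd_id]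
  rw [sum_comm]
  refine sum_congr rfl fun μ _ => ?_
  simp [TensorProduct.tmul_ite]

/-- `h φ_{q+1,0}`, up to the scalar computed in `hOp'_phiQ0'`. -/
def contractedPhi (p q : ℕ) : P p (q + 1) ⊗[ℂ] E p (q + 1) :=
  ∑ μ : Fin (q + 1), ∑ c : Fin q → Fin p,
    (-1 : ℂ) ^ (μ : ℕ) •
      ((X (Fin.natAdd p μ) * zProd p (q + 1) c) ⊗ₜ ωProd p (q + 1) c μ.succAbove)

theorem hOp'_sum_zProd_mul_tmul (p q : ℕ) {g : P p (q + 1)} {n : ℕ}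
    (hg : g.IsWeightedHomogeneous (posWeight p (q + 1)) n) :
    hOp' p (q + 1)
        (∑ a : Fin (q + 1) → Fin p, (zProd p (q + 1) a * g) ⊗ₜ ωProd p (q + 1) a id) =
      ((p : ℂ) + q + n) • (contractedPhi p q * g ⊗ₜ 1) := by
  simp only [map_sum, hOp'_tmul_ωProd_id, contractedPhi, Finset.sum_mul, smul_mul_assoc,
    Algebra.TensorProduct.tmul_mul_tmul, mul_one, Finset.smul_sum]
  rw [sum_comm]
  refine sum_congr rfl fun μ _ => ?_
  rw [← (Fin.insertNthEquiv (fun _ => Fin p) μ).sum_comp, Fintype.sum_prod_type, sum_comm]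
  refine sum_congr rfl fun c _ => ?_
  have hcg := (isWeightedHomogeneous_zProd p (q + 1) c).mul hg
  simp only [Fin.insertNthEquiv, Equiv.coe_fn_mk, Fin.insertNth_apply_same,
    Fin.insertNth_comp_succAbove, zProd_insertNth, mul_assoc]
  rw [← smul_sum, ← TensorProduct.sum_tmul, ← mul_sum, sum_pderiv_X_mul p (q + 1) hcg]
  rw [mul_smul_comm, ← TensorProduct.smul_tmul', smul_comm, Nat.cast_add, add_assoc]

theorem hOp_eq_rTensor (p q ℓ : ℕ) : hOp p q ℓ = (hOp' p q).rTensor (T p q ℓ) := by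
  simp only [hOp, hOp', ← LinearMap.rTensor_def]
  change _ = LinearMap.rTensorHom (T p q ℓ) _
  simp only [map_sum]
  rfl

theorem hOp_phi (p q ℓ : ℕ) :
    hOp p (q + 1) ℓ (phi p (q + 1) ℓ) =
      ((2 : ℂ) ^ (((q + 1 : ℕ) : ℂ) / 2) * κ ^ (q + 1 + ℓ) *
          ((p : ℂ) + q + ℓ)) •
        ∑ b : Fin ℓ → Fin p,
          (contractedPhi p q * zProd p (q + 1) b ⊗ₜ 1) ⊗ₜ eProd p (q + 1) ℓ b := by
  have hphi : phi p (q + 1) ℓ =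
      ((2 : ℂ) ^ (((q + 1 : ℕ) : ℂ) / 2) * κ ^ (q + 1 + ℓ)) •
        ∑ b : Fin ℓ → Fin p,
          (∑ a : Fin (q + 1) → Fin p, (zProd p (q + 1) a * zProd p (q + 1) b) ⊗ₜ
            ωProd p (q + 1) a id) ⊗ₜ eProd p (q + 1) ℓ b := by
    simp only [phi, TensorProduct.sum_tmul]
    exact congrArg _ sum_comm
  rw [hphi, hOp_eq_rTensor, map_smul, map_sum, smul_sum, smul_sum]
  refine sum_congr rfl fun b _ => ?_
  rw [LinearMap.rTensor_tmul,
    hOp'_sum_zProd_mul_tmul p q (isWeightedHomogeneous_zProd p (q + 1) b),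
    TensorProduct.smul_tmul', smul_smul, TensorProduct.smul_tmul']

theorem hOp'_phiQ0' (p q : ℕ) :
    hOp' p (q + 1) (phiQ0' p (q + 1)) =
      ((2 : ℂ) ^ (((q + 1 : ℕ) : ℂ) / 2) * κ ^ (q + 1) *
          ((p : ℂ) + q)) • contractedPhi p q := by
  have h := hOp'_sum_zProd_mul_tmul p q (isWeightedHomogeneous_one ℂ (posWeight p (q + 1)))
  simp only [mul_one, ← Algebra.TensorProduct.one_def, CharP.cast_eq_zero, add_zero] at h
  rw [phiQ0', map_smul]
  exact (congrArg _ h).trans (smul_smul _ _ _)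

theorem rTensor_mulLeft_phi0 (p q ℓ : ℕ) (x : P p q ⊗[ℂ] E p q) :
    (LinearMap.mulLeft ℂ x).rTensor (T p q ℓ) (phi0 p q ℓ) =
      κ ^ ℓ •
        ∑ b : Fin ℓ → Fin p, (x * zProd p q b ⊗ₜ 1) ⊗ₜ eProd p q ℓ b := by
  simp only [phi0, map_smul, map_sum, LinearMap.rTensor_tmul, LinearMap.mulLeft_apply]
  rfl

theorem hphi_eq_general (p q ℓ : ℕ) :
    ((p : ℂ) + q - 1) • hOp p q ℓ (phi p q ℓ)
      = ((p : ℂ) + q + ℓ - 1) •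
          (LinearMap.rTensor (T p q ℓ)
              (LinearMap.mulLeft ℂ (hOp' p q (phiQ0' p q))))
            (phi0 p q ℓ) := by
  cases q with
  | zero => simp [hOp, hOp']
  | succ q =>
    rw [hOp_phi, rTensor_mulLeft_phi0, hOp'_phiQ0']
    simp only [smul_mul_assoc, ← TensorProduct.smul_tmul', ← smul_sum, smul_smul]
    congr 1
    push_cast
    ring

/-- **Lemma (newdef):** `(p+q−1) · (h φ_{q,ℓ}) = (p+q+ℓ−1) · ((h φ_{q,0}) · φ_{0,ℓ})`,
where the product on the right multiplies the polynomial factors, wedges the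
exterior-algebra factors, and retains the tensor factor.  Equivalently,
`ψ_{q,ℓ} = (−1/(2(p+q−1))) (h φ_{q,0}) · φ_{0,ℓ}` equals `(−1/(2(p+q+ℓ−1))) h φ_{q,ℓ}`. -/
theorem hphi_eq (p q ℓ : ℕ) (hp : 1 ≤ p) (hq : 1 ≤ q) :
    ((p : ℂ) + q - 1) • hOp p q ℓ (phi p q ℓ)
      = ((p : ℂ) + q + ℓ - 1) •
          (LinearMap.rTensor (T p q ℓ)
              (LinearMap.mulLeft ℂ (hOp' p q (phiQ0' p q))))
            (phi0 p q ℓ) :=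
  hphi_eq_general p q ℓ

end FockModel
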